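/- The expected prediction error Err = E_y E_{y_new}[||mu_hat - y_new||^2] equals E_y[||y - mu_hat||^2 + 2 tau^2 df], where df = sum_i cov(mu_hat_i, y_i)/tau^2. -/

import Mathlib

/-!
Integrating out `y_new` first gives `E‖μ̂ - y_new‖² = ‖μ̂ - μ‖² + Nτ²` for each fixed `μ̂`.
Expanding `‖y - μ‖² = ‖y - μ̂‖² + 2⟨y - μ, μ̂ - μ⟩ - ‖μ̂ - μ‖²` and taking expectations, with
`E‖y - μ‖² = Nτ²`, turns `E‖μ̂ - μ‖² + Nτ²` into `E‖y - μ̂‖² + 2 E⟨y - μ, μ̂ - μ⟩`.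
Since `y - μ` is centred, `E⟨y - μ, μ̂ - c⟩` does not depend on the constant vector `c`,
so the last term is `2 Σᵢ cov(μ̂ᵢ, yᵢ) = 2τ² df`.
-/

open MeasureTheory

theorem sum_sub_mul_sub_eq {ι : Type*} [Fintype ι] (a b μ c : ι → ℝ) :
    ∑ i, (a i - μ i) * (b i - c i) = ∑ i, (a i - μ i) * b i + ∑ i, -c i * (a i - μ i) := by
  rw [← Finset.sum_add_distrib]
  exact Finset.sum_congr rfl fun i _ => by ring

section

variable {Ω ι : Type*} [MeasurableSpace Ω] {P : Measure Ω} [Fintype ι]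

theorem integral_sum_sq_sub_eq {Y M : Ω → ι → ℝ} {μ : ι → ℝ}
    (hYM : Integrable (fun ω => ∑ i, (Y ω i - M ω i) ^ 2) P)
    (hcross : Integrable (fun ω => ∑ i, (Y ω i - μ i) * (M ω i - μ i)) P)
    (hM : Integrable (fun ω => ∑ i, (M ω i - μ i) ^ 2) P) :
    ∫ ω, ∑ i, (Y ω i - μ i) ^ 2 ∂P = ∫ ω, ∑ i, (Y ω i - M ω i) ^ 2 ∂P
      + 2 * ∫ ω, ∑ i, (Y ω i - μ i) * (M ω i - μ i) ∂P - ∫ ω, ∑ i, (M ω i - μ i) ^ 2 ∂P := by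
  have hexpand : (fun ω => ∑ i, (Y ω i - μ i) ^ 2) = fun ω =>
      ∑ i, (Y ω i - M ω i) ^ 2 + 2 * ∑ i, (Y ω i - μ i) * (M ω i - μ i)
        - ∑ i, (M ω i - μ i) ^ 2 := by
    funext ω
    rw [Finset.mul_sum, ← Finset.sum_add_distrib, ← Finset.sum_sub_distrib]
    exact Finset.sum_congr rfl fun i _ => by ring
  rw [hexpand, integral_sub (f := fun ω => _ + _) (hYM.add (hcross.const_mul 2)) hM,
    integral_add hYM (hcross.const_mul 2), integral_const_mul]

section FiniteMeasure

variable [IsFiniteMeasure P]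

theorem integrable_sum_mul_sub_const {Z : Ω → ι → ℝ} (hZ : ∀ i, Integrable (fun ω => Z ω i) P)
    (a μ : ι → ℝ) : Integrable (fun ω => ∑ i, a i * (Z ω i - μ i)) P :=
  integrable_finsetSum _ fun i _ => ((hZ i).sub (integrable_const _)).const_mul _

theorem integrable_sum_sub_mul_sub_const {Y M : Ω → ι → ℝ} {μ : ι → ℝ}
    (hY : ∀ i, Integrable (fun ω => Y ω i) P)
    (hcross : ∀ i, Integrable (fun ω => (Y ω i - μ i) * M ω i) P) (c : ι → ℝ) :
    Integrable (fun ω => ∑ i, (Y ω i - μ i) * (M ω i - c i)) P := by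
  simp only [sum_sub_mul_sub_eq]
  exact (integrable_finsetSum _ fun i _ => hcross i).add (integrable_sum_mul_sub_const hY _ μ)

theorem integrable_sum_sq_sub_const {M : Ω → ι → ℝ} (hM : ∀ i, Integrable (fun ω => M ω i) P)
    (hM2 : Integrable (fun ω => ∑ i, M ω i ^ 2) P) (c : ι → ℝ) :
    Integrable (fun ω => ∑ i, (M ω i - c i) ^ 2) P := by
  have hexpand : (fun ω => ∑ i, (M ω i - c i) ^ 2) = fun ω =>
      ∑ i, M ω i ^ 2 + ∑ i, (-2 * c i) * (M ω i - c i / 2) := by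
    funext ω
    rw [← Finset.sum_add_distrib]
    exact Finset.sum_congr rfl fun i _ => by ring
  rw [hexpand]
  exact hM2.add (integrable_sum_mul_sub_const hM _ _)

end FiniteMeasure

section ProbabilityMeasure

variable [IsProbabilityMeasure P]

theorem integral_add_const {f : Ω → ℝ} (hf : Integrable f P) (c : ℝ) :
    ∫ ω, f ω + c ∂P = ∫ ω, f ω ∂P + c := by
  rw [integral_add hf (integrable_const c), integral_const, probReal_univ, one_smul]

theorem integral_sum_mul_sub_mean_eq_zero {Z : Ω → ι → ℝ} {μ : ι → ℝ}
    (hZ : ∀ i, Integrable (fun ω => Z ω i) P) (hmean : ∀ i, ∫ ω, Z ω i ∂P = μ i) (a : ι → ℝ) :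
    ∫ ω, ∑ i, a i * (Z ω i - μ i) ∂P = 0 := by
  have hcentered : ∀ i, Integrable (fun ω => a i * (Z ω i - μ i)) P := fun i =>
    ((hZ i).sub (integrable_const _)).const_mul _
  rw [integral_finsetSum _ fun i _ => hcentered i]
  refine Finset.sum_eq_zero fun i _ => ?_
  rw [integral_const_mul, integral_sub (hZ i) (integrable_const _), hmean, integral_const,
    probReal_univ, one_smul, sub_self, mul_zero]

theorem integral_sum_sq_const_sub {Z : Ω → ι → ℝ} {μ : ι → ℝ}
    (hZ : ∀ i, Integrable (fun ω => Z ω i) P) (hmean : ∀ i, ∫ ω, Z ω i ∂P = μ i)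
    (hvar : Integrable (fun ω => ∑ i, (Z ω i - μ i) ^ 2) P) (b : ι → ℝ) :
    ∫ ω, ∑ i, (b i - Z ω i) ^ 2 ∂P = ∑ i, (b i - μ i) ^ 2 + ∫ ω, ∑ i, (Z ω i - μ i) ^ 2 ∂P := by
  have hlin := integrable_sum_mul_sub_const hZ (fun i => -2 * (b i - μ i)) μ
  have hexpand : (fun ω => ∑ i, (b i - Z ω i) ^ 2) = fun ω =>
      (∑ i, (Z ω i - μ i) ^ 2 + ∑ i, -2 * (b i - μ i) * (Z ω i - μ i))
        + ∑ i, (b i - μ i) ^ 2 := by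
    funext ω
    simp only [← Finset.sum_add_distrib]
    exact Finset.sum_congr rfl fun i _ => by ring
  rw [hexpand, integral_add_const (f := fun ω => _ + _) (hvar.add hlin), integral_add hvar hlin,
    integral_sum_mul_sub_mean_eq_zero hZ hmean, add_zero, add_comm]

theorem integral_sum_sub_mean_mul_sub_const {Y M : Ω → ι → ℝ} {μ : ι → ℝ}
    (hY : ∀ i, Integrable (fun ω => Y ω i) P) (hmean : ∀ i, ∫ ω, Y ω i ∂P = μ i)
    (hcross : ∀ i, Integrable (fun ω => (Y ω i - μ i) * M ω i) P) (c : ι → ℝ) :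
    ∫ ω, ∑ i, (Y ω i - μ i) * (M ω i - c i) ∂P = ∫ ω, ∑ i, (Y ω i - μ i) * M ω i ∂P := by
  simp only [sum_sub_mul_sub_eq]
  rw [integral_add (integrable_finsetSum _ fun i _ => hcross i)
    (integrable_sum_mul_sub_const hY _ μ), integral_sum_mul_sub_mean_eq_zero hY hmean, add_zero]

end ProbabilityMeasure

end

/-- Err = E_y E_{y_new}[‖μ̂ - y_new‖²] = E_y[‖y - μ̂‖² + 2τ² df]
    with df = (Σᵢ cov(μ̂ᵢ, yᵢ))/τ². -/
theorem stmt_0 (N : ℕ) (Ω : Type*) [MeasureSpace Ω]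
    [IsProbabilityMeasure (volume : Measure Ω)]
    (y ynew : Ω → Fin N → ℝ) (m : (Fin N → ℝ) → Fin N → ℝ)
    (μ : Fin N → ℝ) (τ : ℝ) (hτ : 0 < τ)
    (hmean : ∀ i, (∫ ω, y ω i) = μ i)
    (hmeannew : ∀ i, (∫ ω, ynew ω i) = μ i)
    (hvar : (∫ ω, ∑ i, (y ω i - μ i) ^ 2) = N * τ ^ 2)
    (hvarnew : (∫ ω, ∑ i, (ynew ω i - μ i) ^ 2) = N * τ ^ 2)
    (hint_y : ∀ i, Integrable (fun ω => y ω i))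
    (hint_new : ∀ i, Integrable (fun ω => ynew ω i))
    (hint_m : ∀ i, Integrable (fun ω => m (y ω) i))
    (hint_sq : Integrable (fun ω => ∑ i, (y ω i - m (y ω) i) ^ 2))
    (hint_cross : ∀ i, Integrable (fun ω => (y ω i - μ i) * m (y ω) i))
    (hint_newsq : Integrable (fun ω => ∑ i, (ynew ω i - μ i) ^ 2))
    (hint_msq : Integrable (fun ω => ∑ i, (m (y ω) i) ^ 2)) :
    (∫ ω, ∫ ω', ∑ i, (m (y ω) i - ynew ω' i) ^ 2) =
      ∫ ω, ((∑ i, (y ω i - m (y ω) i) ^ 2)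
        + 2 * τ ^ 2 *
          ((∫ ω', ∑ i, (y ω' i - μ i) * (m (y ω') i - ∫ ω'', m (y ω'') i)) / τ ^ 2)) := by
  have hm_sq := integrable_sum_sq_sub_const hint_m hint_msq μ
  have hcov : ∀ c : Fin N → ℝ, ∫ ω, ∑ i, (y ω i - μ i) * (m (y ω) i - c i)
      = ∫ ω, ∑ i, (y ω i - μ i) * m (y ω) i :=
    integral_sum_sub_mean_mul_sub_const hint_y hmean hint_cross
  have hcross := integrable_sum_sub_mul_sub_const hint_y hint_cross μ
  calc (∫ ω, ∫ ω', ∑ i, (m (y ω) i - ynew ω' i) ^ 2)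
      = ∫ ω, ∑ i, (m (y ω) i - μ i) ^ 2 + N * τ ^ 2 := by
        simp only [integral_sum_sq_const_sub hint_new hmeannew hint_newsq, hvarnew]
    _ = (∫ ω, ∑ i, (y ω i - m (y ω) i) ^ 2)
          + 2 * ∫ ω, ∑ i, (y ω i - μ i) * (m (y ω) i - μ i) := by
        rw [integral_add_const hm_sq, ← hvar, integral_sum_sq_sub_eq hint_sq hcross hm_sq]
        ring
    _ = _ := by
        rw [integral_add_const hint_sq, hcov, hcov, mul_assoc, mul_div_cancel₀ _ (by positivity)]
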